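/- Let $I = \bigcap_{j=1}^r \langle x_i^{w_{j,i}} : i \in A_j\rangle$ be a monomial ideal without embedded associated primes such that every associated prime has height $2$ (so $|A_j| = 2$ for all $j$). If the set $X_I = \{(k,l) : k < l,\; \exists i \in A_k \cap A_l \text{ with } w_{k,i} \ne w_{l,i}\}$ is non-empty, then $I^{(2)} \not\subset I^2$. -/

import Mathlib

open MvPolynomial Finset

/-- The monomial `x^a` in `K[x_1,…,x_n]`. -/
noncomputable def mon {K : Type*} [Field K] {n : ℕ} (a : Fin n → ℕ) :
    MvPolynomial (Fin n) K :=
  MvPolynomial.monomial (Finsupp.equivFunOnFinite.symm a) 1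

/-- `α(L)`: the least total degree of a nonzero monomial of `L`. -/
noncomputable def alphaI {K σ : Type*} [Field K] (L : Ideal (MvPolynomial σ K)) : ℕ :=
  sInf {d : ℕ | ∃ m : σ →₀ ℕ, (m.sum fun _ e => e) = d ∧ MvPolynomial.monomial m (1 : K) ∈ L}

/-- The weighted ideal `I_w`, generated by `x^{w(a)}` for monomials `x^a ∈ I`. -/
noncomputable def wIdeal {K : Type*} [Field K] {n : ℕ} (w : Fin n → ℕ)
    (I : Ideal (MvPolynomial (Fin n) K)) : Ideal (MvPolynomial (Fin n) K) :=
  Ideal.span {f | ∃ a : Fin n → ℕ, mon (K := K) a ∈ I ∧ f = mon (K := K) (fun i => w i * a i)}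

/-- The irreducible monomial ideal `⟨x_i^{w i} : i ∈ A⟩`. -/
noncomputable def qIdeal {K : Type*} [Field K] {n : ℕ} (A : Finset (Fin n)) (w : Fin n → ℕ) :
    Ideal (MvPolynomial (Fin n) K) :=
  Ideal.span ((fun i => (X i : MvPolynomial (Fin n) K) ^ w i) '' ↑A)

/-- `I` is a monomial ideal. -/
def IsMonomialIdeal {K : Type*} [Field K] {n : ℕ} (I : Ideal (MvPolynomial (Fin n) K)) : Prop :=
  ∃ S : Set (Fin n → ℕ), I = Ideal.span ((mon (K := K)) '' S)

/-- The `s`-th symbolic power `I^{(s)} = ⋂_{p ∈ Ass(I)} (I^s R_p ∩ R)`. -/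
noncomputable def symbPow {R : Type*} [CommRing R] (I : Ideal R) (s : ℕ) : Ideal R :=
  ⨅ p : {p : Ideal R // p ∈ associatedPrimes R (R ⧸ I)},
    letI : p.1.IsPrime := p.2.isPrime
    Ideal.comap (algebraMap R (Localization.AtPrime p.1))
      (Ideal.map (algebraMap R (Localization.AtPrime p.1)) (I ^ s))

/-!
Say `A k = {i, a}`, `A l = {i, b}` and `w k i < w l i`, and let `(d, c)` be the weights of the
edge `{a, b}` if there is one, `(0, 0)` otherwise. The monomial
`x_i^(w k i + w l i - 1) x_a^d x_b^(max (w l b) c)`, times high powers of the other variables,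
lies in every `q_j²`. If it were divisible by a product of two monomials of `I = ⋂ q_j`, their
`i`-exponents would sum below `w k i + w l i`: either one factor misses `x_i^(w k i)`, so carries
`x_a^(w k a) x_b^(w l b)`, or both miss `x_i^(w l i)`, so both carry `x_b^(w l b)`. Either way,
covering the edge `{a, b}` too overshoots the exponent of `x_a` or of `x_b`.
-/

open scoped Pointwise

lemma Finset.exists_eq_pair_of_mem {α : Type*} [DecidableEq α] {s : Finset α} {x : α}
    (hs : s.card = 2) (hx : x ∈ s) : ∃ y, x ≠ y ∧ s = {x, y} := by
  obtain ⟨y, z, hyz, rfl⟩ := card_eq_two.mp hs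
  rcases mem_insert.mp hx with rfl | hxz
  · exact ⟨z, hyz, rfl⟩
  · obtain rfl := mem_singleton.mp hxz
    exact ⟨y, hyz.symm, pair_comm y x⟩

lemma Finset.eq_pair_of_subset_triple {α : Type*} [DecidableEq α] {s : Finset α} {x y z : α}
    (hs : s.card = 2) (hsub : s ⊆ {x, y, z}) : s = {x, y} ∨ s = {x, z} ∨ s = {y, z} := by
  obtain ⟨p, q, hpq, rfl⟩ := card_eq_two.mp hs
  simp only [insert_subset_iff, mem_insert, mem_singleton, singleton_subset_iff] at hsub
  obtain ⟨hp | hp | hp, hq | hq | hq⟩ := hsub <;> subst hp hq <;> simp_all [pair_comm]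

section MonomialIdeals

variable {K : Type*} [Field K] {n : ℕ}

lemma qIdeal_eq_span_monomial (A : Finset (Fin n)) (w : Fin n → ℕ) :
    qIdeal (K := K) A w =
      Ideal.span ((fun t => monomial t (1 : K)) '' ((fun p => Finsupp.single p (w p)) '' ↑A)) := by
  simp only [qIdeal, Set.image_image, X_pow_eq_monomial]

lemma X_pow_mul_X_pow_mem_qIdeal_sq {A : Finset (Fin n)} {w : Fin n → ℕ} {p q : Fin n}
    (hp : p ∈ A) (hq : q ∈ A) :
    (X p ^ w p * X q ^ w q : MvPolynomial (Fin n) K) ∈ qIdeal A w ^ 2 :=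
  sq (qIdeal (K := K) A w) ▸
    Ideal.mul_mem_mul (Ideal.subset_span ⟨p, hp, rfl⟩) (Ideal.subset_span ⟨q, hq, rfl⟩)

lemma mon_mem_qIdeal_sq_of_le {A : Finset (Fin n)} {w : Fin n → ℕ} {E : Fin n → ℕ} {p q : Fin n}
    (hp : p ∈ A) (hq : q ∈ A) (hpq : p ≠ q) (hEp : w p ≤ E p) (hEq : w q ≤ E q) :
    mon (K := K) E ∈ qIdeal A w ^ 2 := by
  refine Ideal.mem_of_dvd _ ?_ (X_pow_mul_X_pow_mem_qIdeal_sq hp hq)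
  rw [X_pow_eq_monomial, X_pow_eq_monomial, monomial_mul, one_mul, mon, monomial_dvd_monomial]
  refine ⟨Or.inr fun x => ?_, dvd_rfl⟩
  rcases eq_or_ne x p with rfl | hxp
  · simp [hpq, hEp]
  · rcases eq_or_ne x q with rfl | hxq
    · simp [hxp, hEq]
    · simp [hxp, hxq]

lemma mon_mem_qIdeal_sq_of_two_mul_le {A : Finset (Fin n)} {w : Fin n → ℕ} {E : Fin n → ℕ}
    {p : Fin n} (hp : p ∈ A) (hEp : 2 * w p ≤ E p) :
    mon (K := K) E ∈ qIdeal A w ^ 2 := by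
  refine Ideal.mem_of_dvd _ ?_ (X_pow_mul_X_pow_mem_qIdeal_sq hp hp)
  rw [← pow_add, X_pow_eq_monomial, mon, monomial_dvd_monomial]
  exact ⟨Or.inr (Finsupp.single_le_iff.mpr (by simpa [two_mul] using hEp)), dvd_rfl⟩

lemma exists_single_le_of_mem_qIdeal {A : Finset (Fin n)} {w : Fin n → ℕ}
    {f : MvPolynomial (Fin n) K} (hf : f ∈ qIdeal A w) :
    ∀ μ ∈ f.support, ∃ p ∈ A, w p ≤ μ p := by
  rw [qIdeal_eq_span_monomial, mem_ideal_span_monomial_image] at hf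
  intro μ hμ
  obtain ⟨_, ⟨p, hp, rfl⟩, hle⟩ := hf μ hμ
  exact ⟨p, hp, Finsupp.single_le_iff.mp hle⟩

lemma sq_le_span_monomial_add {I : Ideal (MvPolynomial (Fin n) K)} {S : Set (Fin n →₀ ℕ)}
    (h : I ≤ Ideal.span ((fun t => monomial t (1 : K)) '' S)) :
    I ^ 2 ≤ Ideal.span ((fun t => monomial t (1 : K)) '' (S + S)) := by
  rw [sq]
  refine (Ideal.mul_mono h h).trans ?_
  rw [Ideal.span_mul_span']
  refine Ideal.span_mono (Set.mul_subset_iff.mpr ?_)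
  rintro _ ⟨s₁, hs₁, rfl⟩ _ ⟨s₂, hs₂, rfl⟩
  exact ⟨s₁ + s₂, Set.add_mem_add hs₁ hs₂, by rw [monomial_mul, one_mul]⟩

end MonomialIdeals

section EdgeIdeals

variable {K : Type*} [Field K] {n r : ℕ} {A : Fin r → Finset (Fin n)} {w : Fin r → Fin n → ℕ}

/-- `x^t` lies in `⋂ⱼ ⟨x_p^{w j p} : p ∈ A j⟩` exactly when `t` covers every edge `A j`. -/
def IsCover (A : Fin r → Finset (Fin n)) (w : Fin r → Fin n → ℕ) (t : Fin n → ℕ) : Prop :=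
  ∀ j, ∃ p ∈ A j, w j p ≤ t p

lemma IsCover.le_or_le {t : Fin n → ℕ} (ht : IsCover A w t) {j : Fin r} {p q : Fin n}
    (hj : A j = {p, q}) : w j p ≤ t p ∨ w j q ≤ t q := by
  obtain ⟨x, hx, hle⟩ := ht j
  rw [hj, mem_insert, mem_singleton] at hx
  rcases hx with rfl | rfl
  · exact Or.inl hle
  · exact Or.inr hle

lemma exists_isCover_add_le_of_mon_mem_sq {E : Fin n → ℕ}
    (hE : mon (K := K) E ∈ (⨅ j, qIdeal (K := K) (A j) (w j)) ^ 2) :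
    ∃ t₁ t₂ : Fin n → ℕ, IsCover A w t₁ ∧ IsCover A w t₂ ∧ ∀ p, t₁ p + t₂ p ≤ E p := by
  have hcover : (⨅ j, qIdeal (K := K) (A j) (w j)) ≤
      Ideal.span ((fun t => monomial t (1 : K)) '' {t | IsCover A w t}) := fun f hf =>
    mem_ideal_span_monomial_image.mpr fun μ hμ =>
      ⟨μ, fun j => exists_single_le_of_mem_qIdeal (Ideal.mem_iInf.mp hf j) μ hμ, le_rfl⟩
  have hmem := mem_ideal_span_monomial_image.mp (sq_le_span_monomial_add hcover hE)
    (Finsupp.equivFunOnFinite.symm E) (by simp [mon])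
  obtain ⟨_, ⟨t₁, ht₁, t₂, ht₂, rfl⟩, hle⟩ := hmem
  exact ⟨t₁, t₂, ht₁, ht₂, fun p => hle p⟩

lemma exists_edge_weight (hwpos : ∀ j, ∀ i ∈ A j, 0 < w j i)
    (hnoemb : ∀ j k, A j ⊆ A k → j = k) (a b : Fin n) :
    ∃ d c : ℕ, ((0 < d ∧ 0 < c) ∨ (d = 0 ∧ c = 0)) ∧
      (∀ j, A j = {a, b} → w j a ≤ d ∧ w j b ≤ c) ∧ ∀ t, IsCover A w t → d ≤ t a ∨ c ≤ t b := by
  by_cases hedge : ∃ j₀, A j₀ = {a, b}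
  · obtain ⟨j₀, hj₀⟩ := hedge
    refine ⟨w j₀ a, w j₀ b, Or.inl ⟨hwpos j₀ a (by simp [hj₀]), hwpos j₀ b (by simp [hj₀])⟩,
      fun j hj => ?_, fun t ht => ht.le_or_le hj₀⟩
    obtain rfl := hnoemb j j₀ (by rw [hj, hj₀])
    exact ⟨le_rfl, le_rfl⟩
  · exact ⟨0, 0, Or.inr ⟨rfl, rfl⟩, fun j hj => (hedge ⟨j, hj⟩).elim,
      fun _ _ => Or.inl (Nat.zero_le _)⟩

lemma mon_mem_iInf_qIdeal_sq (hcard : ∀ j, (A j).card = 2) (hnoemb : ∀ j k, A j ⊆ A k → j = k)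
    {k l : Fin r} {i a b : Fin n} (hk : A k = {i, a}) (hl : A l = {i, b}) (hib : i ≠ b)
    (hab : a ≠ b) {E : Fin n → ℕ} (hEk : 2 * w k i ≤ E i) (hEli : w l i ≤ E i)
    (hElb : w l b ≤ E b) (hEab : ∀ j, A j = {a, b} → w j a ≤ E a ∧ w j b ≤ E b)
    (hEbig : ∀ j, ∀ p ∈ A j, p ≠ i → p ≠ a → p ≠ b → 2 * w j p ≤ E p) :
    mon (K := K) E ∈ ⨅ j, qIdeal (K := K) (A j) (w j) ^ 2 := by
  refine Ideal.mem_iInf.mpr fun j => ?_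
  by_cases hsub : A j ⊆ {i, a, b}
  · rcases Finset.eq_pair_of_subset_triple (hcard j) hsub with hj | hj | hj
    · obtain rfl := hnoemb j k (by rw [hj, hk])
      exact mon_mem_qIdeal_sq_of_two_mul_le (by simp [hk]) hEk
    · obtain rfl := hnoemb j l (by rw [hj, hl])
      exact mon_mem_qIdeal_sq_of_le (by simp [hl]) (by simp [hl]) hib hEli hElb
    · exact mon_mem_qIdeal_sq_of_le (by simp [hj]) (by simp [hj]) hab (hEab j hj).1 (hEab j hj).2
  · obtain ⟨p, hp, hpn⟩ := not_subset.mp hsub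
    simp only [mem_insert, mem_singleton, not_or] at hpn
    exact mon_mem_qIdeal_sq_of_two_mul_le hp (hEbig j p hp hpn.1 hpn.2.1 hpn.2.2)

lemma mon_not_mem_sq_iInf_qIdeal {k l : Fin r} {i a b : Fin n} (hk : A k = {i, a})
    (hl : A l = {i, b}) (hwi : w k i ≤ w l i) (hka : 0 < w k a) (hlb : 0 < w l b) {d c : ℕ}
    (hdc : (0 < d ∧ 0 < c) ∨ (d = 0 ∧ c = 0))
    (hcover : ∀ t, IsCover A w t → d ≤ t a ∨ c ≤ t b) {E : Fin n → ℕ}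
    (hEi : E i < w k i + w l i) (hEa : E a ≤ d) (hEb : E b ≤ max (w l b) c) :
    mon (K := K) E ∉ (⨅ j, qIdeal (K := K) (A j) (w j)) ^ 2 := by
  intro hE
  obtain ⟨t₁, t₂, ht₁, ht₂, hle⟩ := exists_isCover_add_le_of_mon_mem_sq hE
  have := ht₁.le_or_le hk
  have := ht₂.le_or_le hk
  have := ht₁.le_or_le hl
  have := ht₂.le_or_le hl
  have := hcover t₁ ht₁
  have := hcover t₂ ht₂
  have := hle i
  have := hle a
  have := hle b
  omega

lemma not_iInf_qIdeal_sq_le_sq_of_lt (hcard : ∀ j, (A j).card = 2)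
    (hwpos : ∀ j, ∀ i ∈ A j, 0 < w j i) (hnoemb : ∀ j k, A j ⊆ A k → j = k)
    {k l : Fin r} (hkl : k ≠ l) {i : Fin n} (hik : i ∈ A k) (hil : i ∈ A l)
    (hlt : w k i < w l i) :
    ¬ (⨅ j, qIdeal (K := K) (A j) (w j) ^ 2) ≤ (⨅ j, qIdeal (K := K) (A j) (w j)) ^ 2 := by
  obtain ⟨a, hia, hk⟩ := exists_eq_pair_of_mem (hcard k) hik
  obtain ⟨b, hib, hl⟩ := exists_eq_pair_of_mem (hcard l) hil
  have hab : a ≠ b := by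
    rintro rfl
    exact hkl (hnoemb k l (by rw [hk, hl]))
  obtain ⟨d, c, hdc, hEab, hcover⟩ := exists_edge_weight hwpos hnoemb a b
  obtain ⟨E, hEi, hEa, hEb, hEbig⟩ : ∃ E : Fin n → ℕ, E i = w k i + w l i - 1 ∧ E a = d ∧
      E b = max (w l b) c ∧ ∀ j, ∀ p, p ≠ i → p ≠ a → p ≠ b → 2 * w j p ≤ E p :=
    ⟨fun p => if p = i then w k i + w l i - 1 else if p = a then d else if p = b then max (w l b) c
      else 2 * univ.sup fun j => w j p, by simp, by simp [hia.symm], by simp [hib.symm, hab.symm],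
      fun j p hpi hpa hpb => by
        simpa [hpi, hpa, hpb] using le_sup (f := fun j => w j p) (mem_univ j)⟩
  have hki : 0 < w k i := hwpos k i hik
  have hlb : 0 < w l b := hwpos l b (by simp [hl])
  intro hle
  refine mon_not_mem_sq_iInf_qIdeal (K := K) hk hl hlt.le (hwpos k a (by simp [hk])) hlb hdc
    hcover (by omega) hEa.le hEb.le (hle ?_)
  refine mon_mem_iInf_qIdeal_sq hcard hnoemb hk hl hib hab (by omega) (by omega)
    (by simp [hEb]) (fun j hj => ?_) (fun j p _ => hEbig j p)
  rw [hEa, hEb]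
  exact ⟨(hEab j hj).1, le_max_of_le_right (hEab j hj).2⟩

end EdgeIdeals

theorem symbPow_two_not_le_of_XI_nonempty_general {K : Type*} [Field K] {n r : ℕ}
    (A : Fin r → Finset (Fin n)) (w : Fin r → Fin n → ℕ)
    (hcard : ∀ j, (A j).card = 2)
    (hwpos : ∀ j, ∀ i ∈ A j, 0 < w j i)
    (hnoemb : ∀ j k, A j ⊆ A k → j = k)
    (hX : ∃ k l : Fin r, k < l ∧ ∃ i, i ∈ A k ∧ i ∈ A l ∧ w k i ≠ w l i) :
    ¬ (⨅ j, (qIdeal (K := K) (A j) (w j)) ^ 2) ≤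
        (⨅ j, qIdeal (K := K) (A j) (w j)) ^ 2 := by
  obtain ⟨k, l, hkl, i, hik, hil, hne⟩ := hX
  rcases hne.lt_or_gt with hlt | hgt
  · exact not_iInf_qIdeal_sq_le_sq_of_lt hcard hwpos hnoemb hkl.ne hik hil hlt
  · exact not_iInf_qIdeal_sq_le_sq_of_lt hcard hwpos hnoemb hkl.ne' hil hik hgt

/-- if all associated primes have height `2` and `X_I ≠ ∅`,
then `I^{(2)} ⊄ I²`. -/
theorem symbPow_two_not_le_of_XI_nonempty {K : Type*} [Field K] {n r : ℕ}
    (A : Fin r → Finset (Fin n)) (w : Fin r → Fin n → ℕ)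
    (hcard : ∀ j, (A j).card = 2)
    (hwpos : ∀ j, ∀ i ∈ A j, 0 < w j i)
    (hnoemb : ∀ j k, A j ⊆ A k → j = k)
    (hirr : ∀ j : Fin r,
      ¬ (⨅ k : {k : Fin r // k ≠ j}, qIdeal (K := K) (A k.1) (w k.1)) ≤ qIdeal (A j) (w j))
    (hX : ∃ k l : Fin r, k < l ∧ ∃ i, i ∈ A k ∧ i ∈ A l ∧ w k i ≠ w l i) :
    ¬ (⨅ j, (qIdeal (K := K) (A j) (w j)) ^ 2) ≤
        (⨅ j, qIdeal (K := K) (A j) (w j)) ^ 2 :=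
  symbPow_two_not_le_of_XI_nonempty_general A w hcard hwpos hnoemb hX
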